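/- Suppose the matrices M_1,…,M_r satisfy conditions (H0), (H1), (H2) and (H3). Fix m ∈ ℤ^r with m ≥ 0. Then there exist l ≥ 0 and a family of words (w_a)_{a ∈ A} in W_l satisfying: (1) o(w_a) = a for each a ∈ A; (2) for all a, b ∈ A and every nonzero p ∈ ℤ^r with |p| ≤ m, the words w_a and τ_p w_b do not agree on [0,l] ∩ [p, p+l]. -/

import Mathlib

/-!
Fix a state `c`. By (H3) and (H1), one word `v` starting at `c` fails to be `p`-periodic for
every nonzero `p` in a large box: concatenate, through connecting paths given by (H2), one
non-`p`-periodic word for each such `p`. Every state `a` reaches `c` along a path of some shape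
`q a`, and padding these paths with powers of a cycle at `c` makes the shapes `q a` pairwise far
apart in one coordinate. The word `w_a` is then the path from `a`, followed by `v`, extended to a
common shape. For `|p| ≤ m`, the copies of `v` inside `w_a` and `τ_p w_b` are offset by
`p + q b - q a`, which is nonzero (by the separation if `a ≠ b`) and lies in the box, so they
already disagree.
-/

open Matrix

variable {r : ℕ} {A : Type*}

/-- The `j`-th standard basis vector of `ℤ^r`. -/
def evec (r : ℕ) (j : Fin r) : Fin r → ℤ := fun i => if i = j then 1 else 0

/-- `w` represents a word of shape `m` (only its values on `[0,m]` matter):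
`m ≥ 0` and the transition matrices are respected on the box `[0,m]`. -/
def IsWord (M : Fin r → Matrix A A ℤ) (m : Fin r → ℤ) (w : (Fin r → ℤ) → A) : Prop :=
  0 ≤ m ∧ ∀ (l : Fin r → ℤ) (j : Fin r), 0 ≤ l → l + evec r j ≤ m →
    M j (w (l + evec r j)) (w l) = 1

/-- Two representing functions agree on the box `[0,m]`; this is equality of
words of shape `m`. -/
def AgreeOn (m : Fin r → ℤ) (w w' : (Fin r → ℤ) → A) : Prop :=
  ∀ l : Fin r → ℤ, 0 ≤ l → l ≤ m → w l = w' l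

/-- The restriction `w|[k,k+n]`, as a word based at `0`: `(restrictW k w) i = w (i + k)`. -/
def restrictW (k : Fin r → ℤ) (w : (Fin r → ℤ) → A) : (Fin r → ℤ) → A :=
  fun i => w (i + k)

/-- `w` (a word of shape `m`) is `p`-periodic: the translate `τ_p w`, given by
`(τ_p w)(x) = w (x - p)`, agrees with `w` on `[0,m] ∩ [p,p+m]`. -/
def IsPeriodic (p m : Fin r → ℤ) (w : (Fin r → ℤ) → A) : Prop :=
  ∀ x : Fin r → ℤ, 0 ≤ x → x ≤ m → p ≤ x → x ≤ p + m → w (x - p) = w x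

/-- Condition (H0): each `M j` is nonzero. -/
def H0 (M : Fin r → Matrix A A ℤ) : Prop := ∀ j, M j ≠ 0

/-- Condition (H1): unique products of words. -/
def H1 (M : Fin r → Matrix A A ℤ) : Prop :=
  ∀ (m n : Fin r → ℤ) (u v : (Fin r → ℤ) → A),
    IsWord M m u → IsWord M n v → u m = v 0 →
      (∃ w, IsWord M (m + n) w ∧ AgreeOn m w u ∧ AgreeOn n (restrictW m w) v) ∧
      (∀ w w', IsWord M (m + n) w → AgreeOn m w u → AgreeOn n (restrictW m w) v →
        IsWord M (m + n) w' → AgreeOn m w' u → AgreeOn n (restrictW m w') v →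
        AgreeOn (m + n) w w')

/-- Condition (H2): the directed graph on `A` with an edge `a → b` whenever
`M i b a = 1` for some `i` is irreducible. -/
def H2 (M : Fin r → Matrix A A ℤ) : Prop :=
  ∀ a b : A, Relation.ReflTransGen (fun x y => ∃ i, M i y x = 1) a b

/-- Condition (H3): for each nonzero `p ∈ ℤ^r` there is a non-`p`-periodic word. -/
def H3 (M : Fin r → Matrix A A ℤ) : Prop :=
  ∀ p : Fin r → ℤ, p ≠ 0 → ∃ (m : Fin r → ℤ) (w : (Fin r → ℤ) → A),
    IsWord M m w ∧ ¬ IsPeriodic p m w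

/-- Condition (H1a): the matrices commute. -/
def H1a [Fintype A] (M : Fin r → Matrix A A ℤ) : Prop :=
  ∀ i j, M i * M j = M j * M i

/-- Condition (H1b): for `i < j`, the entries of `M i * M j` lie in `{0,1}`. -/
def H1b [Fintype A] (M : Fin r → Matrix A A ℤ) : Prop :=
  ∀ i j, i < j → ∀ a b : A, (M i * M j) b a = 0 ∨ (M i * M j) b a = 1

/-- Condition (H1c): for `i < j < k`, the entries of `M i * M j * M k` lie in `{0,1}`. -/
def H1c [Fintype A] (M : Fin r → Matrix A A ℤ) : Prop :=
  ∀ i j k, i < j → j < k → ∀ a b : A,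
    (M i * M j * M k) b a = 0 ∨ (M i * M j * M k) b a = 1

/-- Condition (H3*). -/
def H3star (M : Fin r → Matrix A A ℤ) : Prop :=
  ∀ (j : Fin r) (m : Fin r → ℤ), m j = 0 → ∀ w : (Fin r → ℤ) → A, IsWord M m w →
    ∃ u u', IsWord M (m + evec r j) u ∧ IsWord M (m + evec r j) u' ∧
      AgreeOn m u w ∧ AgreeOn m u' w ∧ u (evec r j) ≠ u' (evec r j)

/-- `x` represents the product word `uv` of `u ∈ W_m` and `v ∈ W_n`. -/
def IsProd (M : Fin r → Matrix A A ℤ) (m n : Fin r → ℤ)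
    (u v x : (Fin r → ℤ) → A) : Prop :=
  IsWord M (m + n) x ∧ AgreeOn m x u ∧ AgreeOn n (restrictW m x) v

open Finset

section Words

variable {M : Fin r → Matrix A A ℤ}

@[simp]
lemma evec_self (j : Fin r) : evec r j j = 1 := if_pos rfl

lemma evec_nonneg (j : Fin r) : 0 ≤ evec r j := fun i => by
  unfold evec; split_ifs <;> simp

lemma isWord_zero (w : (Fin r → ℤ) → A) : IsWord M 0 w :=
  ⟨le_rfl, fun l j hl hle => by
    have : 0 ≤ l j := hl j
    have : l j + 1 ≤ 0 := by simpa using hle j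
    omega⟩

lemma IsWord.mono {m n : Fin r → ℤ} {w : (Fin r → ℤ) → A} (hw : IsWord M n w)
    (hm : 0 ≤ m) (hmn : m ≤ n) : IsWord M m w :=
  ⟨hm, fun l j hl hle => hw.2 l j hl (hle.trans hmn)⟩

lemma exists_isProd (h1 : H1 M) {m n : Fin r → ℤ} {u v : (Fin r → ℤ) → A}
    (hu : IsWord M m u) (hv : IsWord M n v) (h : u m = v 0) : ∃ w, IsProd M m n u v w :=
  (h1 m n u v hu hv h).1

end Words

section Reach

variable {M : Fin r → Matrix A A ℤ}

def Reach (M : Fin r → Matrix A A ℤ) (n : Fin r → ℤ) (a b : A) : Prop :=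
  ∃ w, IsWord M n w ∧ w 0 = a ∧ w n = b

lemma Reach.nonneg {n : Fin r → ℤ} {a b : A} (h : Reach M n a b) : 0 ≤ n := by
  obtain ⟨w, hw, -⟩ := h
  exact hw.1

lemma reach_zero (a : A) : Reach M 0 a a := ⟨fun _ => a, isWord_zero _, rfl, rfl⟩

lemma Reach.trans (h1 : H1 M) {m n : Fin r → ℤ} {a b c : A} (hab : Reach M m a b)
    (hbc : Reach M n b c) : Reach M (m + n) a c := by
  obtain ⟨u, hu, rfl, rfl⟩ := hab
  obtain ⟨v, hv, hv0, rfl⟩ := hbc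
  obtain ⟨w, hw, hwu, hwv⟩ := exists_isProd h1 hu hv hv0.symm
  refine ⟨w, hw, hwu 0 le_rfl hu.1, ?_⟩
  simpa [restrictW, add_comm] using hwv n hv.1 le_rfl

lemma Reach.nsmul (h1 : H1 M) {n : Fin r → ℤ} {c : A} (h : Reach M n c c) (t : ℕ) :
    Reach M (t • n) c c := by
  induction t with
  | zero => simpa using reach_zero c
  | succ t ih => rw [succ_nsmul]; exact ih.trans h1 h

lemma reach_evec {j : Fin r} {a b : A} (hab : M j b a = 1) : Reach M (evec r j) a b := by
  refine ⟨fun x => if x j ≤ 0 then a else b, ⟨evec_nonneg j, fun l i hl hle => ?_⟩,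
    by simp, by simp⟩
  have hli : 0 ≤ l i := hl i
  have hle' : l i + 1 ≤ evec r j i := by simpa using hle i
  obtain rfl : i = j := by
    by_contra hij
    simp only [evec, if_neg hij] at hle'
    omega
  have hli0 : l i = 0 := by rw [evec_self] at hle'; omega
  simpa [hli0] using hab

lemma exists_reach (h1 : H1 M) {a b : A}
    (h : Relation.ReflTransGen (fun x y => ∃ i, M i y x = 1) a b) : ∃ n, Reach M n a b := by
  induction h with
  | refl => exact ⟨0, reach_zero a⟩
  | tail _ hstep ih =>
    obtain ⟨n, hn⟩ := ih
    obtain ⟨i, hi⟩ := hstep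
    exact ⟨n + evec r i, hn.trans h1 (reach_evec hi)⟩

lemma exists_entry_eq_one (hM : ∀ j (a b : A), M j b a = 0 ∨ M j b a = 1) {j : Fin r}
    (hj : M j ≠ 0) : ∃ a b, M j b a = 1 := by
  by_contra! h
  exact hj (Matrix.ext fun b a => (hM j a b).resolve_right (h a b))

variable (hM : ∀ j (a b : A), M j b a = 0 ∨ M j b a = 1) (h0 : H0 M) (h1 : H1 M) (h2 : H2 M)
include hM h0 h1 h2

lemma exists_cycle_one_le_apply (c : A) (j : Fin r) : ∃ D, Reach M D c c ∧ 1 ≤ D j := by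
  obtain ⟨a, b, hab⟩ := exists_entry_eq_one hM (h0 j)
  obtain ⟨g, hg⟩ := exists_reach h1 (h2 c a)
  obtain ⟨g', hg'⟩ := exists_reach h1 (h2 b c)
  refine ⟨g + evec r j + g', (hg.trans h1 (reach_evec hab)).trans h1 hg', ?_⟩
  have : 0 ≤ g j := hg.nonneg j
  have : 0 ≤ g' j := hg'.nonneg j
  simp only [Pi.add_apply, evec_self]
  omega

lemma exists_cycle_one_le (c : A) : ∃ C, Reach M C c c ∧ ∀ j, 1 ≤ C j := by
  suffices h : ∀ S : Finset (Fin r), ∃ C, Reach M C c c ∧ ∀ j ∈ S, 1 ≤ C j by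
    simpa using h univ
  intro S
  induction S using Finset.induction_on with
  | empty => exact ⟨0, reach_zero c, by simp⟩
  | insert j S _ ih =>
    obtain ⟨C, hC, hCS⟩ := ih
    obtain ⟨D, hD, hDj⟩ := exists_cycle_one_le_apply hM h0 h1 h2 c j
    refine ⟨C + D, hC.trans h1 hD, fun i hi => ?_⟩
    have : 0 ≤ C i := hC.nonneg i
    have : 0 ≤ D i := hD.nonneg i
    rcases mem_insert.mp hi with rfl | hi
    · simp only [Pi.add_apply]; omega
    · have := hCS i hi; simp only [Pi.add_apply]; omega

/-- Append a power of a cycle at the last letter, then cut back to shape `N`. -/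
lemma exists_extension {n N : Fin r → ℤ} {w : (Fin r → ℤ) → A} (hw : IsWord M n w)
    (hnN : n ≤ N) : ∃ w', IsWord M N w' ∧ AgreeOn n w' w := by
  obtain ⟨C, hC, hC1⟩ := exists_cycle_one_le hM h0 h1 h2 (w n)
  obtain ⟨t, ht⟩ : ∃ t : ℕ, ∀ i, N i ≤ t := ⟨∑ i, (N i).toNat, fun i =>
    (Int.self_le_toNat _).trans <| Int.ofNat_le.mpr <|
      single_le_sum (f := fun i => (N i).toNat) (by simp) (mem_univ i)⟩
  obtain ⟨u, hu, hu0, -⟩ := hC.nsmul h1 t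
  obtain ⟨w', hw', hw'w, -⟩ := exists_isProd h1 hw hu hu0.symm
  refine ⟨w', hw'.mono (hw.1.trans hnN) fun i => ?_, hw'w⟩
  have := ht i
  have : 0 ≤ n i := hw.1 i
  have : (t : ℤ) ≤ t * C i := le_mul_of_one_le_right (by positivity) (hC1 i)
  rw [Pi.add_apply, Pi.smul_apply, nsmul_eq_mul]
  linarith

lemma exists_word_with_infix {k s l : Fin r → ℤ} {a c : A} {v : (Fin r → ℤ) → A}
    (hk : Reach M k a c) (hv : IsWord M s v) (hv0 : v 0 = c) (hl : k + s ≤ l) :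
    ∃ w, IsWord M l w ∧ w 0 = a ∧ AgreeOn s (restrictW k w) v := by
  obtain ⟨u, hu, rfl, huk⟩ := hk
  obtain ⟨w₁, hw₁, hw₁u, hw₁v⟩ := exists_isProd h1 hu hv (huk.trans hv0.symm)
  obtain ⟨w, hw, hww₁⟩ := exists_extension hM h0 h1 h2 hw₁ hl
  refine ⟨w, hw, by rw [hww₁ 0 le_rfl hw₁.1, hw₁u 0 le_rfl hu.1], fun z hz hzs => ?_⟩
  rw [← hw₁v z hz hzs]
  exact hww₁ _ (add_nonneg hz hu.1) (by rw [add_comm z]; exact add_le_add_right hzs k)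

end Reach

section Periodic

variable {M : Fin r → Matrix A A ℤ}

lemma IsPeriodic.restrictW {p k n N : Fin r → ℤ} {w : (Fin r → ℤ) → A}
    (h : IsPeriodic p N w) (hk : 0 ≤ k) (hkN : k + n ≤ N) : IsPeriodic p n (restrictW k w) := by
  intro x hx0 hxn hpx hxp
  show w (x - p + k) = w (x + k)
  rw [sub_add_eq_add_sub]
  refine h (x + k) ?_ ?_ ?_ ?_ <;> intro i
  all_goals
    have := hk i; have := hkN i; have := hx0 i; have := hxn i; have := hpx i; have := hxp i
    simp only [Pi.add_apply, Pi.zero_apply] at *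
    omega

lemma IsPeriodic.congr {p n : Fin r → ℤ} {w w' : (Fin r → ℤ) → A} (h : IsPeriodic p n w)
    (hww' : AgreeOn n w w') : IsPeriodic p n w' := by
  intro x hx0 hxn hpx hxp
  rw [← hww' x hx0 hxn, ← hww' (x - p) (sub_nonneg.mpr hpx) (sub_le_iff_le_add'.mpr hxp)]
  exact h x hx0 hxn hpx hxp

lemma not_isPeriodic_of_agreeOn_restrictW {p k n N : Fin r → ℤ} {u w : (Fin r → ℤ) → A}
    (hu : ¬ IsPeriodic p n u) (hwu : AgreeOn n (restrictW k w) u) (hk : 0 ≤ k)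
    (hkN : k + n ≤ N) : ¬ IsPeriodic p N w :=
  fun h => hu ((h.restrictW hk hkN).congr hwu)

lemma exists_word_not_isPeriodic (h1 : H1 M) (h2 : H2 M) (h3 : H3 M) (c : A)
    (P : Finset (Fin r → ℤ)) :
    ∃ s v, IsWord M s v ∧ v 0 = c ∧ ∀ p ∈ P, p ≠ 0 → ¬ IsPeriodic p s v := by
  induction P using Finset.induction_on with
  | empty => exact ⟨0, fun _ => c, isWord_zero _, rfl, by simp⟩
  | insert p P _ ih =>
    obtain ⟨s, v, hv, rfl, hvP⟩ := ih
    by_cases hp : p = 0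
    · refine ⟨s, v, hv, rfl, fun p' hp' hp'0 => hvP p' ?_ hp'0⟩
      exact (mem_insert.mp hp').resolve_left (hp ▸ hp'0)
    obtain ⟨n, u, hu, hup⟩ := h3 p hp
    obtain ⟨g, y, hy, hy0, hyg⟩ := exists_reach h1 (h2 (v s) (u 0))
    obtain ⟨w₁, hw₁, hw₁v, hw₁y⟩ := exists_isProd h1 hv hy hy0.symm
    have hw₁g : w₁ (s + g) = u 0 := by
      rw [← hyg, ← hw₁y g hy.1 le_rfl, restrictW, add_comm]
    obtain ⟨w, hw, hww₁, hwu⟩ := exists_isProd h1 hw₁ hu hw₁g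
    have hwv : AgreeOn s (restrictW 0 w) v := fun x hx0 hxs => by
      have hxsg : x ≤ s + g := hxs.trans (le_add_of_nonneg_right hy.1)
      rw [restrictW, add_zero, hww₁ x hx0 hxsg, hw₁v x hx0 hxs]
    refine ⟨s + g + n, w, hw, by rw [hww₁ 0 le_rfl hw₁.1, hw₁v 0 le_rfl hv.1], ?_⟩
    intro p' hp' hp'0
    rcases mem_insert.mp hp' with rfl | hp'
    · exact not_isPeriodic_of_agreeOn_restrictW hup hwu hw₁.1 le_rfl
    · exact not_isPeriodic_of_agreeOn_restrictW (hvP p' hp' hp'0) hwv le_rfl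
        (by rw [zero_add, add_assoc]; exact le_add_of_nonneg_right (add_nonneg hy.1 hu.1))

lemma exists_ne_sub_of_not_isPeriodic {p k k' s l : Fin r → ℤ} {u w v : (Fin r → ℤ) → A}
    (hu : AgreeOn s (restrictW k u) v) (hw : AgreeOn s (restrictW k' w) v)
    (hk : 0 ≤ k) (hk' : 0 ≤ k') (hkl : k + s ≤ l) (hk'l : k' + s ≤ l)
    (hv : ¬ IsPeriodic (p + k' - k) s v) :
    ∃ x, 0 ≤ x ∧ x ≤ l ∧ p ≤ x ∧ x ≤ p + l ∧ u x ≠ w (x - p) := by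
  simp only [IsPeriodic, not_forall] at hv
  obtain ⟨x, hx0, hxs, hpx, hxp, hne⟩ := hv
  have hx : k + x - p = x - (p + k' - k) + k' := by abel
  refine ⟨k + x, ?_, ?_, ?_, ?_, ?_⟩
  rotate_right
  · have hux : u (k + x) = v x := by rw [add_comm]; exact hu x hx0 hxs
    have hwx : w (x - (p + k' - k) + k') = v (x - (p + k' - k)) :=
      hw _ (sub_nonneg.mpr hpx) (sub_le_iff_le_add'.mpr hxp)
    rw [hx, hux, hwx]
    exact fun h => hne h.symm
  all_goals
    intro i
    have := hk i; have := hk' i; have := hkl i; have := hk'l i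
    have := hx0 i; have := hxs i; have := hpx i; have := hxp i
    simp only [Pi.add_apply, Pi.sub_apply, Pi.zero_apply] at *
    omega

end Periodic

lemma exists_nat_mul_separated {ι : Type*} [Fintype ι] (f : ι → ℤ) {d : ℤ} (hd : 1 ≤ d)
    (R : ℤ) : ∃ t : ι → ℕ, ∀ a b, a ≠ b → R < |f a + t a * d - (f b + t b * d)| := by
  set N := ∑ a, |f a|
  have hN : ∀ a, |f a| ≤ N := fun a => single_le_sum (fun b _ => abs_nonneg (f b)) (mem_univ a)
  set K : ℕ := (2 * N + R).toNat + 1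
  have hK : 2 * N + R < K := by have := Int.self_le_toNat (2 * N + R); omega
  set e := Fintype.equivFin ι
  refine ⟨fun a => e a * K, fun a b hab => ?_⟩
  set δ : ℤ := e a - e b
  have hδ : 1 ≤ |δ| := Int.one_le_abs <| sub_ne_zero.mpr <| by
    simpa [Fin.val_eq_val] using e.injective.ne hab
  have hfab : |f a - f b| ≤ 2 * N := by
    have := abs_sub (f a) (f b); linarith [hN a, hN b]
  have hδKd : (K : ℤ) ≤ |δ * K * d| := by
    rw [abs_mul, abs_mul, abs_of_nonneg (by positivity : (0 : ℤ) ≤ K),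
      abs_of_pos (by omega : 0 < d)]
    calc (K : ℤ) = 1 * K * 1 := by ring
      _ ≤ |δ| * K * d := by gcongr
  calc R < K - 2 * N := by linarith
    _ ≤ |δ * K * d| - |f b - f a| := by rw [abs_sub_comm]; linarith
    _ ≤ |δ * K * d - (f b - f a)| := abs_sub_abs_le_abs_sub _ _
    _ = |f a + (e a * K : ℕ) * d - (f b + (e b * K : ℕ) * d)| := by
      congr 1; push_cast; ring

section Separation

variable {M : Fin r → Matrix A A ℤ} [Fintype A]

lemma exists_reach_separated (hM : ∀ j (a b : A), M j b a = 0 ∨ M j b a = 1) (h0 : H0 M)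
    (h1 : H1 M) (h2 : H2 M) (c : A) (j : Fin r) (R : ℤ) :
    ∃ q : A → Fin r → ℤ, (∀ a, Reach M (q a) a c) ∧
      ∀ a b, a ≠ b → R < |q a j - q b j| := by
  choose n hn using fun a => exists_reach h1 (h2 a c)
  obtain ⟨C, hC, hC1⟩ := exists_cycle_one_le hM h0 h1 h2 c
  obtain ⟨t, ht⟩ := exists_nat_mul_separated (fun a => n a j) (hC1 j) R
  refine ⟨fun a => n a + t a • C, fun a => (hn a).trans h1 (hC.nsmul h1 _), fun a b hab => ?_⟩
  have hqj : ∀ a, (n a + t a • C) j = n a j + t a * C j := fun a => by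
    rw [Pi.add_apply, Pi.smul_apply, nsmul_eq_mul]
  simpa only [hqj] using ht a b hab

end Separation

theorem stmt_16_general [Fintype A] [Nonempty A] (hr : 0 < r)
    (M : Fin r → Matrix A A ℤ)
    (hM : ∀ j (a b : A), M j b a = 0 ∨ M j b a = 1)
    (h0 : H0 M) (h1 : H1 M) (h2 : H2 M) (h3 : H3 M)
    (m : Fin r → ℤ) :
    ∃ (l : Fin r → ℤ) (ws : A → (Fin r → ℤ) → A),
      (∀ a : A, IsWord M l (ws a) ∧ ws a 0 = a) ∧
      ∀ (a b : A) (p : Fin r → ℤ), p ≠ 0 → (fun i => |p i|) ≤ m →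
        ∃ x : Fin r → ℤ, 0 ≤ x ∧ x ≤ l ∧ p ≤ x ∧ x ≤ p + l ∧
          ws a x ≠ ws b (x - p) := by
  obtain ⟨c⟩ := ‹Nonempty A›
  let j₀ : Fin r := ⟨0, hr⟩
  obtain ⟨q, hq, hsep⟩ := exists_reach_separated hM h0 h1 h2 c j₀ (m j₀)
  have hq0 : ∀ a, 0 ≤ q a := fun a => (hq a).nonneg
  set Q := ∑ a, q a
  have hqQ : ∀ a, q a ≤ Q := fun a => single_le_sum (fun b _ => hq0 b) (mem_univ a)
  obtain ⟨s, v, hv, hv0, hvP⟩ :=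
    exists_word_not_isPeriodic h1 h2 h3 c (Finset.Icc (-(m + Q)) (m + Q))
  choose ws hws hws0 hwsv using fun a =>
    exists_word_with_infix hM h0 h1 h2 (hq a) hv hv0 (add_le_add (hqQ a) le_rfl)
  refine ⟨Q + s, ws, fun a => ⟨hws a, hws0 a⟩, fun a b p hp hpm => ?_⟩
  refine exists_ne_sub_of_not_isPeriodic (hwsv a) (hwsv b) (hq0 a) (hq0 b)
    (add_le_add (hqQ a) le_rfl) (add_le_add (hqQ b) le_rfl) (hvP _ ?_ ?_)
  · rw [Finset.mem_Icc]
    constructor <;> intro i <;>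
      have := abs_le.mp (hpm i) <;> have := hq0 a i <;> have := hq0 b i <;>
      have := hqQ a i <;> have := hqQ b i <;>
      simp only [Pi.add_apply, Pi.sub_apply, Pi.neg_apply, Pi.zero_apply] at * <;> omega
  · intro hp'
    have hpq : p = q a - q b := eq_sub_of_add_eq (sub_eq_zero.mp hp')
    obtain rfl | hab := eq_or_ne a b
    · exact hp (by simpa using hpq)
    · have := hsep a b hab
      have := hpm j₀
      simp only [hpq, Pi.sub_apply] at this
      omega

/-- under (H0)-(H3), for any `m ≥ 0` there are `l ≥ 0` and words
`w_a ∈ W_l` with `o(w_a) = a`, such that for all `a, b ∈ A` and all nonzero `p`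
with `|p| ≤ m`, `w_a` and `τ_p w_b` do not agree on `[0,l] ∩ [p,p+l]`. -/
theorem stmt_16 [Fintype A] [Nonempty A] (hr : 0 < r)
    (M : Fin r → Matrix A A ℤ)
    (hM : ∀ j (a b : A), M j b a = 0 ∨ M j b a = 1)
    (h0 : H0 M) (h1 : H1 M) (h2 : H2 M) (h3 : H3 M)
    (m : Fin r → ℤ) (hm : 0 ≤ m) :
    ∃ (l : Fin r → ℤ) (ws : A → (Fin r → ℤ) → A),
      (∀ a : A, IsWord M l (ws a) ∧ ws a 0 = a) ∧
      ∀ (a b : A) (p : Fin r → ℤ), p ≠ 0 → (fun i => |p i|) ≤ m →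
        ∃ x : Fin r → ℤ, 0 ≤ x ∧ x ≤ l ∧ p ≤ x ∧ x ≤ p + l ∧
          ws a x ≠ ws b (x - p) :=
  stmt_16_general hr M hM h0 h1 h2 h3 m
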